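/- Let n and B be powers of two with B < n, let F ≥ 2 be an even integer, let Ĝ be a flat filter with B buckets and sharpness F, let d ≥ 1 be an integer, and let (σ_r, b_r), r ∈ [d], be hashings with each σ_r odd. Suppose that for all f, f' ∈ [n] with f ≠ f', Σ_{r∈[d]} Ĝ_{o_{f,r}(f)}^{−1}·Ĝ_{o_{f,r}(f')} ≤ 2d/B. Then for every x ∈ ℂ^n and every f ∈ [n], the number of indices r ∈ [d] satisfying |x̂_f − Ĝ_{o_{f,r}(f)}^{−1}·(m_r)_{h_r(f)}| ≤ (10/B)·Σ_{f'≠f}|x̂_{f'}| is at least 8d/10. -/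

import Mathlib

open Finset

/-- The (integer) rounded bucket index `round((B/n)·π_{σ,b}(f))`, where
`π_{σ,b}(f) = σ(f-b) mod n`. -/
noncomputable def hround (n B : ℕ) (σ b f : ZMod n) : ℤ :=
  round ((B : ℝ) / (n : ℝ) * (((σ * (f - b)).val : ℕ) : ℝ))

/-- The offset `o_{f,σ,b}(f') = π_{σ,b}(f') - (n/B)·h_{σ,b}(f)  (mod n)`. -/
noncomputable def offset (n B : ℕ) (σ b f f' : ZMod n) : ZMod n :=
  σ * (f' - b) - ((n / B : ℕ) : ZMod n) * ((hround n B σ b f : ℤ) : ZMod n)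

/-- The representative of `ℓ ∈ Z_n` in `(-n/2, n/2]`. -/
def rep (n : ℕ) (ℓ : ZMod n) : ℤ :=
  if (ℓ.val : ℤ) ≤ (n : ℤ) / 2 then (ℓ.val : ℤ) else (ℓ.val : ℤ) - (n : ℤ)

/-- A flat filter with `B` buckets and sharpness `F`. -/
def IsFlatFilter (n B F : ℕ) (G : ZMod n → ℝ) : Prop :=
  (∀ f : ZMod n, G (-f) = G f) ∧
  (∀ f : ZMod n, 0 ≤ G f ∧ G f ≤ 1) ∧
  (∀ f : ZMod n, (|rep n f| : ℝ) ≤ (n : ℝ) / (2 * B) → 1 - (1 / 4 : ℝ) ^ (F - 1) ≤ G f) ∧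
  (∀ f : ZMod n, (n : ℝ) / B ≤ (|rep n f| : ℝ) →
    G f ≤ (1 / 4 : ℝ) ^ (F - 1) * ((n : ℝ) / (B * (|rep n f| : ℝ))) ^ (F - 1))

/-- Discrete Fourier transform on `Z_n`. -/
noncomputable def dftZ (n : ℕ) [NeZero n] (x : ZMod n → ℂ) : ZMod n → ℂ := fun f =>
  (1 / (Real.sqrt n) : ℂ) *
    ∑ j : ZMod n, x j * Complex.exp (2 * (Real.pi : ℂ) * Complex.I *
      ((j.val * f.val : ℕ) : ℂ) / (n : ℂ))

/-- The value `(m_r)_{h_r(f)}` of the `r`-th measurement vector at bucket `h_r(f)`: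
`∑_{f'} Ĝ_{o_{f,σ,b}(f')} x̂_{f'}`. -/
noncomputable def measAt (n B : ℕ) [NeZero n] (G : ZMod n → ℝ) (σ b f : ZMod n)
    (xhat : ZMod n → ℂ) : ℂ :=
  ∑ f' : ZMod n, (G (offset n B σ b f f') : ℂ) * xhat f'

/-- Uniform sample space of hashing pairs `(σ, b)` with `σ` odd. -/
def hashPairs (n : ℕ) [NeZero n] : Finset (ZMod n × ZMod n) :=
  (Finset.univ.filter fun σ : ZMod n => Odd σ.val) ×ˢ Finset.univ


lemma rep_abs_le_of_cast (n : ℕ) [NeZero n] (v : ℤ) (hv : 2 * |v| ≤ (n : ℤ)) :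
    |rep n ((v : ZMod n))| ≤ |v| := by
  have hn : 0 < (n : ℤ) := by exact_mod_cast Nat.pos_of_ne_zero (NeZero.ne n)
  have hval : (((v : ZMod n)).val : ℤ) = v % (n : ℤ) := by exact_mod_cast ZMod.val_intCast v
  have hvlt : (((v : ZMod n)).val : ℤ) < n := by exact_mod_cast ZMod.val_lt _
  have hv0 : (0:ℤ) ≤ (((v : ZMod n)).val : ℤ) := Int.ofNat_nonneg _
  have habs := abs_choice v
  have hw0 := abs_nonneg v
  set w := |v| with hwdef
  have hmod : (((v : ZMod n)).val : ℤ) = v ∨ (((v : ZMod n)).val : ℤ) = v + n := by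
    rcases le_or_gt 0 v with h | h
    · left; rw [hval, Int.emod_eq_of_lt h (by omega)]
    · right
      rw [hval, show v % (n:ℤ) = (v + n) % n by
          rw [show v + (n:ℤ) = v + n * 1 by ring, Int.add_mul_emod_self_left],
        Int.emod_eq_of_lt (by omega) (by omega)]
  unfold rep
  split_ifs with h <;> (rw [abs_le]; constructor <;> omega)

lemma abs_rep_offset_self (n B : ℕ) [NeZero n] (hdvd : B ∣ n) (hB : 0 < B)
    (σ b f : ZMod n) : (|rep n (offset n B σ b f f)| : ℝ) ≤ (n : ℝ) / (2 * B) := by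
  have hn : 0 < n := Nat.pos_of_ne_zero (NeZero.ne n)
  have hn0 : (0:ℝ) < n := by exact_mod_cast hn
  have hB0 : (0:ℝ) < B := by exact_mod_cast hB
  set p : ℕ := (σ * (f - b)).val with hp
  set h : ℤ := hround n B σ b f with hh
  set v : ℤ := (p : ℤ) - ((n / B : ℕ) : ℤ) * h with hvdef
  have hoff : offset n B σ b f f = ((v : ℤ) : ZMod n) := by
    rw [hvdef, Int.cast_sub, Int.cast_mul, Int.cast_natCast, Int.cast_natCast, offset,
      show ((p : ℕ) : ZMod n) = σ * (f - b) from by simp [hp, ZMod.natCast_val, ZMod.cast_id],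
      ← hh]
  have hm : ((n / B : ℕ) : ℝ) = (n : ℝ) / B := by
    rw [Nat.cast_div hdvd (by positivity)]
  have hv : |((v : ℤ) : ℝ)| ≤ (n : ℝ) / (2 * B) := by
    have h2 : |(B : ℝ) / (n : ℝ) * (p : ℝ) - (h : ℝ)| ≤ 1 / 2 := by
      rw [hh, hround]
      exact abs_sub_round _
    have hveq : ((v : ℤ) : ℝ) = (n : ℝ) / B * ((B : ℝ) / n * (p : ℝ) - (h : ℝ)) := by
      rw [hvdef, Int.cast_sub, Int.cast_mul, Int.cast_natCast, Int.cast_natCast, hm,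
        mul_sub, ← mul_assoc, div_mul_div_comm, mul_comm (n:ℝ) (B:ℝ), div_self (by positivity),
        one_mul]
    rw [hveq, abs_mul, abs_of_nonneg (by positivity : (0:ℝ) ≤ (n:ℝ)/B)]
    calc (n : ℝ) / B * |(B : ℝ) / n * (p : ℝ) - (h : ℝ)| ≤ (n : ℝ) / B * (1 / 2) :=
          mul_le_mul_of_nonneg_left h2 (by positivity)
      _ = (n : ℝ) / (2 * B) := by ring
  have hint : 2 * |v| ≤ (n : ℤ) := by
    have hB1 : (1:ℝ) ≤ B := by exact_mod_cast hB
    have : (2 * |v| : ℝ) ≤ (n : ℤ) := by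
      rw [Int.cast_abs]
      push_cast
      have hnB : (n : ℝ) / (2 * B) ≤ (n : ℝ) / 2 := by
        apply div_le_div_of_nonneg_left (le_of_lt hn0) (by norm_num) (by linarith)
      linarith
    exact_mod_cast this
  rw [hoff]
  have hr := rep_abs_le_of_cast n v hint
  calc (|rep n ((v : ℤ) : ZMod n)| : ℝ) ≤ (|v| : ℝ) := by exact_mod_cast hr
    _ ≤ (n : ℝ) / (2 * B) := hv

lemma count_good {d : ℕ} (err E : Fin d → ℝ) (S Br dr : ℝ)
    (hB : 0 < Br) (hS : 0 ≤ S) (hdd : (((univ : Finset (Fin d))).card : ℝ) = dr)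
    (hkey : ∀ r, err r ≤ E r) (hE0 : ∀ r, 0 ≤ E r)
    (hsum : ∑ r, E r ≤ 2 * dr / Br * S) :
    8 * dr / 10 ≤ ((univ.filter (fun r => err r ≤ 10 / Br * S)).card : ℝ) := by
  have hd0 : (0:ℝ) ≤ dr := by rw [← hdd]; positivity
  by_cases hS0 : S = 0
  · have hall : ∀ r, err r ≤ 10 / Br * S := by
      intro r
      have h1 : E r ≤ 0 := by
        refine le_trans (Finset.single_le_sum (fun i _ => hE0 i) (mem_univ r)) ?_
        simpa [hS0] using hsum
      have h2 := hkey r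
      rw [hS0, mul_zero]
      linarith
    rw [Finset.filter_true_of_mem fun r _ => hall r, hdd]
    linarith
  · have hSpos : 0 < S := lt_of_le_of_ne hS (Ne.symm hS0)
    have hcards : ((univ.filter (fun r => err r ≤ 10 / Br * S)).card : ℝ) +
        ((univ.filter (fun r => ¬ (err r ≤ 10 / Br * S))).card : ℝ) = dr := by
      rw [← hdd]
      exact_mod_cast Finset.card_filter_add_card_filter_not
        (p := fun r => err r ≤ 10 / Br * S)
    have hbad : ((univ.filter (fun r => ¬ (err r ≤ 10 / Br * S))).card : ℝ) * (10 / Br * S) ≤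
        2 * dr / Br * S := by
      calc ((univ.filter (fun r => ¬ (err r ≤ 10 / Br * S))).card : ℝ) * (10 / Br * S)
          = ∑ _r ∈ univ.filter (fun r => ¬ (err r ≤ 10 / Br * S)), (10 / Br * S) := by
            rw [Finset.sum_const, nsmul_eq_mul]
        _ ≤ ∑ r ∈ univ.filter (fun r => ¬ (err r ≤ 10 / Br * S)), E r :=
            Finset.sum_le_sum fun r hr =>
              le_trans (not_le.mp (Finset.mem_filter.mp hr).2).le (hkey r)
        _ ≤ ∑ r, E r := Finset.sum_le_sum_of_subset_of_nonneg
            (Finset.filter_subset _ _) fun r _ _ => hE0 r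
        _ ≤ 2 * dr / Br * S := hsum
    have hSB : 0 < S / Br := div_pos hSpos hB
    have h2 : ((univ.filter (fun r => ¬ (err r ≤ 10 / Br * S))).card : ℝ) * 10 ≤ 2 * dr := by
      refine (mul_le_mul_iff_of_pos_right hSB).mp ?_
      calc ((univ.filter (fun r => ¬ (err r ≤ 10 / Br * S))).card : ℝ) * 10 * (S / Br)
          = ((univ.filter (fun r => ¬ (err r ≤ 10 / Br * S))).card : ℝ) * (10 / Br * S) := by
            ring
        _ ≤ 2 * dr / Br * S := hbad
        _ = 2 * dr * (S / Br) := by ring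
    linarith

/-- Lemma on fine estimation in most repetitions: if the hash family satisfies the constraint
`∑_r Ĝ_{o_{f,r}(f)}⁻¹ Ĝ_{o_{f,r}(f')} ≤ 2d/B` for all `f ≠ f'`, then for every `x` and `f`,
at least `8d/10` of the repetitions `r` give
`|x̂_f - Ĝ_{o_{f,r}(f)}⁻¹ (m_r)_{h_r(f)}| ≤ (10/B) ∑_{f'≠f} |x̂_{f'}|`. -/
theorem estimate_most_repetitions
    (n B : ℕ) [NeZero n] (ha : ∃ a, n = 2 ^ a) (hb : ∃ c, B = 2 ^ c) (hBn : B < n)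
    (F : ℕ) (hF : 2 ≤ F) (hFeven : Even F)
    (G : ZMod n → ℝ) (hG : IsFlatFilter n B F G)
    (d : ℕ) (hd : 1 ≤ d) (σ bb : Fin d → ZMod n) (hσ : ∀ r, Odd (σ r).val)
    (hyp : ∀ f f' : ZMod n, f ≠ f' →
      ∑ r : Fin d, (G (offset n B (σ r) (bb r) f f))⁻¹ *
        G (offset n B (σ r) (bb r) f f') ≤ 2 * d / B) :
    ∀ x : ZMod n → ℂ, ∀ f : ZMod n,
      (8 * (d : ℝ) / 10) ≤
        ((Finset.univ.filter (fun r : Fin d =>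
          ‖dftZ n x f -
            ((G (offset n B (σ r) (bb r) f f))⁻¹ : ℂ) *
              measAt n B G (σ r) (bb r) f (dftZ n x)‖ ≤
          10 / B * ∑ f' ∈ Finset.univ.erase f, ‖dftZ n x f'‖)).card : ℝ) := by
  intro x f
  obtain ⟨a, hna⟩ := ha
  obtain ⟨c, hbc⟩ := hb
  have hB0 : 0 < B := by
    have : B ≠ 0 := by rw [hbc]; exact pow_ne_zero _ two_ne_zero
    exact Nat.pos_of_ne_zero this
  have hBr : (0:ℝ) < B := by exact_mod_cast hB0
  have hdvd : B ∣ n := by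
    rw [hbc, hna]
    refine pow_dvd_pow 2 ?_
    have h2 : (2:ℕ)^c < 2^a := by rw [← hbc, ← hna]; exact hBn
    exact le_of_lt ((Nat.pow_lt_pow_iff_right (by norm_num)).mp h2)
  -- the filter value at the center is at least 3/4
  have hGpos : ∀ r : Fin d, (3:ℝ)/4 ≤ G (offset n B (σ r) (bb r) f f) := by
    intro r
    have hsmall := abs_rep_offset_self n B hdvd hB0 (σ r) (bb r) f
    have h1 := hG.2.2.1 _ hsmall
    have h2 : ((1:ℝ)/4)^(F-1) ≤ ((1:ℝ)/4)^1 :=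
      pow_le_pow_of_le_one (by norm_num) (by norm_num) (by omega)
    rw [pow_one] at h2
    linarith
  -- pointwise error bound
  have hkey : ∀ r : Fin d,
      ‖dftZ n x f - ((G (offset n B (σ r) (bb r) f f))⁻¹ : ℂ) *
        measAt n B G (σ r) (bb r) f (dftZ n x)‖ ≤
      ∑ f' ∈ univ.erase f, (G (offset n B (σ r) (bb r) f f))⁻¹ *
        G (offset n B (σ r) (bb r) f f') * ‖dftZ n x f'‖ := by
    intro r
    set G0 := G (offset n B (σ r) (bb r) f f) with hG0def
    have hG0 : (0:ℝ) < G0 := lt_of_lt_of_le (by norm_num) (hGpos r)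
    have hG0c : ((G0:ℝ):ℂ) ≠ 0 := by exact_mod_cast hG0.ne'
    have hsplit : measAt n B G (σ r) (bb r) f (dftZ n x) =
        (G0 : ℂ) * dftZ n x f + ∑ f' ∈ univ.erase f,
          (G (offset n B (σ r) (bb r) f f') : ℂ) * dftZ n x f' := by
      rw [measAt, ← Finset.add_sum_erase _ _ (Finset.mem_univ f)]
    have heq : ∀ T : ℂ, dftZ n x f - ((G0 : ℂ))⁻¹ * ((G0 : ℂ) * dftZ n x f + T) =
        -(((G0 : ℂ))⁻¹ * T) := by
      intro T
      have h1 : ((G0 : ℂ))⁻¹ * (G0 : ℂ) = 1 := inv_mul_cancel₀ hG0c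
      rw [mul_add, ← mul_assoc, h1, one_mul]; ring
    rw [hsplit, heq, norm_neg, norm_mul, norm_inv,
      Complex.norm_of_nonneg hG0.le]
    calc G0⁻¹ * ‖∑ f' ∈ univ.erase f,
            (G (offset n B (σ r) (bb r) f f') : ℂ) * dftZ n x f'‖
        ≤ G0⁻¹ * ∑ f' ∈ univ.erase f,
            G (offset n B (σ r) (bb r) f f') * ‖dftZ n x f'‖ := by
          refine mul_le_mul_of_nonneg_left ?_ (inv_nonneg.mpr hG0.le)
          refine le_trans (norm_sum_le _ _) ?_
          refine le_of_eq (Finset.sum_congr rfl fun f' _ => ?_)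
          rw [norm_mul, Complex.norm_of_nonneg (hG.2.1 _).1]
      _ = ∑ f' ∈ univ.erase f, G0⁻¹ * G (offset n B (σ r) (bb r) f f') *
            ‖dftZ n x f'‖ := by
          rw [Finset.mul_sum]
          exact Finset.sum_congr rfl fun f' _ => by ring
  -- nonnegativity of E
  have hE0 : ∀ r : Fin d, (0:ℝ) ≤ ∑ f' ∈ univ.erase f,
      (G (offset n B (σ r) (bb r) f f))⁻¹ * G (offset n B (σ r) (bb r) f f') *
        ‖dftZ n x f'‖ := by
    intro r
    refine Finset.sum_nonneg fun f' _ => ?_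
    exact mul_nonneg (mul_nonneg (inv_nonneg.mpr (hG.2.1 _).1) (hG.2.1 _).1)
      (norm_nonneg _)
  -- total sum bound
  have hEsum : ∑ r : Fin d, (∑ f' ∈ univ.erase f,
      (G (offset n B (σ r) (bb r) f f))⁻¹ * G (offset n B (σ r) (bb r) f f') *
        ‖dftZ n x f'‖) ≤
      2 * (d:ℝ) / B * ∑ f' ∈ univ.erase f, ‖dftZ n x f'‖ := by
    rw [Finset.sum_comm]
    calc ∑ f' ∈ univ.erase f, ∑ r : Fin d,
          (G (offset n B (σ r) (bb r) f f))⁻¹ * G (offset n B (σ r) (bb r) f f') *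
            ‖dftZ n x f'‖
        ≤ ∑ f' ∈ univ.erase f, 2 * (d:ℝ) / B * ‖dftZ n x f'‖ := by
          refine Finset.sum_le_sum fun f' hf' => ?_
          have hne : f ≠ f' := (Finset.ne_of_mem_erase hf').symm
          have h1 := hyp f f' hne
          calc ∑ r : Fin d, (G (offset n B (σ r) (bb r) f f))⁻¹ *
                G (offset n B (σ r) (bb r) f f') * ‖dftZ n x f'‖
              = (∑ r : Fin d, (G (offset n B (σ r) (bb r) f f))⁻¹ *
                  G (offset n B (σ r) (bb r) f f')) * ‖dftZ n x f'‖ := by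
                rw [Finset.sum_mul]
            _ ≤ 2 * (d:ℝ) / B * ‖dftZ n x f'‖ :=
                mul_le_mul_of_nonneg_right h1 (norm_nonneg _)
      _ = 2 * (d:ℝ) / B * ∑ f' ∈ univ.erase f, ‖dftZ n x f'‖ := by
          rw [Finset.mul_sum]
  exact count_good
    (fun r => ‖dftZ n x f - ((G (offset n B (σ r) (bb r) f f))⁻¹ : ℂ) *
      measAt n B G (σ r) (bb r) f (dftZ n x)‖)
    (fun r => ∑ f' ∈ univ.erase f, (G (offset n B (σ r) (bb r) f f))⁻¹ *
      G (offset n B (σ r) (bb r) f f') * ‖dftZ n x f'‖)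
    (∑ f' ∈ univ.erase f, ‖dftZ n x f'‖) (B:ℝ) (d:ℝ)
    hBr (Finset.sum_nonneg fun f' _ => norm_nonneg _)
    (by rw [Finset.card_univ, Fintype.card_fin])
    hkey hE0 hEsum
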